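/- If X is a uniformly complete Archimedean vector lattice, then every order ideal of finite codimension in X is uniformly closed. -/

import Mathlib

/-- Relative uniform convergence closedness: `A` is uniformly closed if it contains the
limit of every sequence in `A` that converges relatively uniformly (with regulator `e`). -/
def RUClosed {X : Type*} [AddCommGroup X] [Lattice X] [Module ℝ X] (A : Set X) : Prop :=
  ∀ (x : X) (a : ℕ → X) (e : X), 0 ≤ e → (∀ n, a n ∈ A) →
    (∀ ε : ℝ, 0 < ε → ∃ N, ∀ n ≥ N, |a n - x| ≤ ε • e) → x ∈ A

/-- A linear functional is order bounded if it is bounded on every order interval. -/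
def OrderBoundedFunc {X : Type*} [AddCommGroup X] [Lattice X] [Module ℝ X]
    (φ : X →ₗ[ℝ] ℝ) : Prop :=
  ∀ a b : X, ∃ M : ℝ, ∀ x : X, a ≤ x → x ≤ b → |φ x| ≤ M

/-- A submodule is a (vector) sublattice if it is closed under finite suprema. -/
def IsVectorSublattice {X : Type*} [AddCommGroup X] [Lattice X] [Module ℝ X]
    (Y : Submodule ℝ X) : Prop :=
  ∀ x ∈ Y, ∀ y ∈ Y, x ⊔ y ∈ Y

/-- A submodule is an order ideal if it is solid. -/
def IsOrderIdeal {X : Type*} [AddCommGroup X] [Lattice X] [Module ℝ X]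
    (J : Submodule ℝ X) : Prop :=
  ∀ x y : X, |x| ≤ |y| → y ∈ J → x ∈ J

/-- The Archimedean property for a vector lattice. -/
def ArchimedeanVL (X : Type*) [AddCommGroup X] [Lattice X] [Module ℝ X] : Prop :=
  ∀ x y : X, 0 ≤ x → (∀ n : ℕ, n • x ≤ y) → x = 0

/-- Uniform completeness: every relatively uniformly Cauchy sequence (with regulator `e`)
converges relatively uniformly (with regulator `e`). -/
def UniformlyCompleteVL (X : Type*) [AddCommGroup X] [Lattice X] [Module ℝ X] : Prop :=
  ∀ (a : ℕ → X) (e : X), 0 ≤ e →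
    (∀ ε : ℝ, 0 < ε → ∃ N, ∀ m ≥ N, ∀ n ≥ N, |a m - a n| ≤ ε • e) →
    ∃ x : X, ∀ ε : ℝ, 0 < ε → ∃ N, ∀ n ≥ N, |a n - x| ≤ ε • e

/-!
Write `C(e)` (`ruClosure J e` below) for the set of `e`-uniform limits of elements of `J`; it is an
order ideal containing `J`, and it lies in every order ideal that contains `J` and `e`. Uniform
completeness lets one trade the regulator `e` for a better one: if `|x - bₖ| ≤ 4⁻ᵏ |e|` with
`bₖ ∈ J`, the series `L = ∑ 2ᵏ |x - bₖ|` converges, `L ∈ C(e)`, and `|x - bₖ| ≤ 2⁻ᵏ L`, so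
`x ∈ C(L) ⊆ C(e)`. If `L ∈ C(L)` then `L ∈ J`, hence `x ∈ J`; otherwise `C(L) ⊊ C(e)`, which can
happen only finitely often in a row because both ideals contain `J` and `X ⧸ J` is finite
dimensional.
-/

open Finset

def RUTendsto {X : Type*} [AddCommGroup X] [Lattice X] [Module ℝ X] (a : ℕ → X) (e x : X) :
    Prop :=
  ∀ ε : ℝ, 0 < ε → ∃ N, ∀ n ≥ N, |a n - x| ≤ ε • e

section VectorLattice

variable {X : Type*} [AddCommGroup X] [Lattice X] [IsOrderedAddMonoid X]

/-- Riesz decomposition; the witness is `z` clipped to `[-b, b]`. -/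
theorem exists_abs_le_and_abs_sub_le {z a b : X} (ha : 0 ≤ a) (hb : 0 ≤ b) (h : |z| ≤ a + b) :
    ∃ w, |w| ≤ b ∧ |z - w| ≤ a := by
  refine ⟨(z ⊔ -b) ⊓ b, abs_le'.2 ⟨inf_le_right, neg_le.2 (le_inf le_sup_right (neg_le_self hb))⟩,
    abs_le'.2 ⟨?_, ?_⟩⟩
  · rw [sub_le_comm]
    refine le_inf ((sub_le_self z ha).trans le_sup_left) ?_
    rw [sub_le_iff_le_add']
    exact (le_abs_self z).trans h
  · rw [neg_sub, sub_le_iff_le_add]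
    refine inf_le_left.trans (sup_le (le_add_of_nonneg_left ha) ?_)
    calc -b = a - (a + b) := by abel
      _ ≤ a - |z| := sub_le_sub_left h a
      _ = a + -|z| := sub_eq_add_neg a |z|
      _ ≤ a + z := by gcongr; exact neg_le.1 (neg_le_abs z)

theorem abs_le_abs_sub_add_abs (a b : X) : |a| ≤ |a - b| + |b| := by
  simpa using abs_add_le (a - b) b

variable [Module ℝ X] [PosSMulMono ℝ X]

theorem abs_smul' (c : ℝ) (a : X) : |c • a| = |c| • |a| := by
  have abs_smul_of_pos : ∀ d : ℝ, 0 < d → ∀ b : X, |d • b| = d • |b| := fun d hd b => by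
    rw [abs, abs, ← smul_neg]
    exact ((OrderIso.smulRight hd).map_sup b (-b)).symm
  rcases lt_trichotomy c 0 with hc | rfl | hc
  · rw [← neg_smul_neg, abs_smul_of_pos _ (neg_pos.2 hc), abs_neg, abs_of_neg hc]
  · simp
  · rw [abs_smul_of_pos c hc, abs_of_pos hc]

theorem ArchimedeanVL.nonpos_of_forall_le_smul (hArch : ArchimedeanVL X) {y e : X} (he : 0 ≤ e)
    (h : ∀ δ : ℝ, 0 < δ → y ≤ δ • e) : y ≤ 0 := by
  suffices y ⊔ 0 = 0 from this ▸ le_sup_left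
  refine hArch _ e le_sup_right fun n => ?_
  have hδ : (0 : ℝ) < 1 / (n + 1) := by positivity
  calc n • (y ⊔ 0) = (n : ℝ) • (y ⊔ 0) := (Nat.cast_smul_eq_nsmul ℝ n _).symm
    _ ≤ (n : ℝ) • (1 / (n + 1) : ℝ) • e :=
      smul_le_smul_of_nonneg_left (sup_le (h _ hδ) (smul_nonneg hδ.le he)) n.cast_nonneg
    _ = (n / (n + 1) : ℝ) • e := by rw [smul_smul, mul_one_div]
    _ ≤ (1 : ℝ) • e :=
      smul_le_smul_of_nonneg_right (div_le_one_of_le₀ (by linarith) (by positivity)) he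
    _ = e := one_smul ℝ e

theorem RUTendsto.le_of_monotone (hArch : ArchimedeanVL X) {S : ℕ → X} {e L : X} (he : 0 ≤ e)
    (hS : Monotone S) (h : RUTendsto S e L) (n : ℕ) : S n ≤ L := by
  refine sub_nonpos.1 (hArch.nonpos_of_forall_le_smul he fun δ hδ => ?_)
  obtain ⟨N, hN⟩ := h δ hδ
  calc S n - L ≤ S (max n N) - L := sub_le_sub_right (hS (le_max_left n N)) L
    _ ≤ |S (max n N) - L| := le_abs_self _
    _ ≤ δ • e := hN _ (le_max_right n N)

theorem UniformlyCompleteVL.exists_ruTendsto_sum (hcomp : UniformlyCompleteVL X) {t : ℕ → X}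
    {e : X} (he : 0 ≤ e) (ht0 : ∀ k, 0 ≤ t k) (hte : ∀ k, t k ≤ (1 / 2 : ℝ) ^ k • e) :
    ∃ L, RUTendsto (fun n => ∑ k ∈ range n, t k) e L := by
  refine hcomp _ e he fun ε hε => ?_
  obtain ⟨N, hN⟩ := exists_pow_lt_of_lt_one (half_pos hε) (by norm_num : (1 / 2 : ℝ) < 1)
  have tail_le : ∀ m n, N ≤ n → n ≤ m →
      |∑ k ∈ range m, t k - ∑ k ∈ range n, t k| ≤ ε • e := by
    intro m n hn hnm
    have hgeom : ∑ k ∈ Ico n m, (1 / 2 : ℝ) ^ k ≤ ε := by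
      have := geom_sum_Ico_le_of_lt_one (m := n) (n := m) (by norm_num : (0 : ℝ) ≤ 1 / 2)
        (by norm_num)
      have := pow_le_pow_of_le_one (by norm_num : (0 : ℝ) ≤ 1 / 2) (by norm_num) hn
      have : (1 / 2 : ℝ) ^ n / (1 - 1 / 2) = 2 * (1 / 2) ^ n := by ring
      linarith
    rw [← sum_Ico_eq_sub _ hnm, abs_of_nonneg (sum_nonneg fun k _ => ht0 k)]
    calc ∑ k ∈ Ico n m, t k ≤ ∑ k ∈ Ico n m, (1 / 2 : ℝ) ^ k • e := sum_le_sum fun k _ => hte k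
      _ = (∑ k ∈ Ico n m, (1 / 2 : ℝ) ^ k) • e := (sum_smul ..).symm
      _ ≤ ε • e := smul_le_smul_of_nonneg_right hgeom he
  refine ⟨N, fun m hm n hn => ?_⟩
  rcases le_total n m with hnm | hmn
  · exact tail_le m n hn hnm
  · rw [abs_sub_comm]; exact tail_le n m hm hmn

variable (J : Submodule ℝ X)

/-- The regulator enters as `|e|` so that this is a submodule for every `e`. -/
def ruClosure (e : X) : Submodule ℝ X where
  carrier := {z | ∀ ε : ℝ, 0 < ε → ∃ j ∈ J, |z - j| ≤ ε • |e|}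
  zero_mem' ε hε := ⟨0, J.zero_mem, by simpa using smul_nonneg hε.le (abs_nonneg e)⟩
  add_mem' {z w} hz hw ε hε := by
    obtain ⟨jz, hjz, hz⟩ := hz (ε / 2) (half_pos hε)
    obtain ⟨jw, hjw, hw⟩ := hw (ε / 2) (half_pos hε)
    refine ⟨jz + jw, J.add_mem hjz hjw, ?_⟩
    calc |z + w - (jz + jw)| = |(z - jz) + (w - jw)| := by rw [add_sub_add_comm]
      _ ≤ |z - jz| + |w - jw| := abs_add_le _ _
      _ ≤ (ε / 2) • |e| + (ε / 2) • |e| := add_le_add hz hw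
      _ = ε • |e| := by rw [← add_smul, add_halves]
  smul_mem' c z hz ε hε := by
    obtain ⟨j, hj, hzj⟩ := hz (ε / (|c| + 1)) (by positivity)
    refine ⟨c • j, J.smul_mem c hj, ?_⟩
    calc |c • z - c • j| = |c| • |z - j| := by rw [← smul_sub, abs_smul']
      _ ≤ |c| • (ε / (|c| + 1)) • |e| := smul_le_smul_of_nonneg_left hzj (abs_nonneg c)
      _ = (|c| / (|c| + 1) * ε) • |e| := by rw [smul_smul]; ring_nf
      _ ≤ ε • |e| := by
        refine smul_le_smul_of_nonneg_right ?_ (abs_nonneg e)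
        have : |c| / (|c| + 1) ≤ 1 := (div_le_one (by positivity)).2 (by linarith)
        nlinarith

variable {J}

theorem le_ruClosure {e : X} : J ≤ ruClosure J e := fun j hj ε hε =>
  ⟨j, hj, by simpa using smul_nonneg hε.le (abs_nonneg e)⟩

theorem ruClosure_isOrderIdeal (hJ : IsOrderIdeal J) (e : X) : IsOrderIdeal (ruClosure J e) := by
  intro z' z hz'z hz ε hε
  obtain ⟨j, hj, hzj⟩ := hz ε hε
  have hz_le : |z| ≤ ε • |e| + |j| := (abs_le_abs_sub_add_abs z j).trans (add_le_add_left hzj _)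
  obtain ⟨w, hwj, hz'w⟩ := exists_abs_le_and_abs_sub_le (smul_nonneg hε.le (abs_nonneg e))
    (abs_nonneg j) (hz'z.trans hz_le)
  exact ⟨w, hJ w j hwj hj, hz'w⟩

theorem ruClosure_le {Q : Submodule ℝ X} (hQ : IsOrderIdeal Q) (hJQ : J ≤ Q) {e : X} (he : e ∈ Q) :
    ruClosure J e ≤ Q := by
  intro z hz
  obtain ⟨j, hj, hzj⟩ := hz 1 one_pos
  rw [one_smul] at hzj
  simpa using Q.add_mem (hQ (z - j) e hzj he) (hJQ hj)

theorem mem_of_mem_ruClosure_self (hJ : IsOrderIdeal J) {e : X} (he : e ∈ ruClosure J e) :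
    e ∈ J := by
  obtain ⟨j, hj, hej⟩ := he (1 / 2) (by norm_num)
  have h1 : |e| ≤ (1 / 2 : ℝ) • |e| + |j| :=
    (abs_le_abs_sub_add_abs e j).trans (add_le_add_left hej _)
  have h2 : (1 / 2 : ℝ) • |e| ≤ |j| := by
    rw [← sub_le_iff_le_add'] at h1
    convert h1 using 1
    module
  refine hJ e ((2 : ℝ) • j) ?_ (J.smul_mem 2 hj)
  calc |e| = (2 : ℝ) • (1 / 2 : ℝ) • |e| := by module
    _ ≤ (2 : ℝ) • |j| := smul_le_smul_of_nonneg_left h2 (by norm_num)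
    _ = |(2 : ℝ) • j| := by rw [abs_smul', abs_two]

theorem mem_ruClosure_of_ruTendsto {e y : X} {a : ℕ → X} (ha : ∀ n, a n ∈ ruClosure J e)
    (h : RUTendsto a |e| y) : y ∈ ruClosure J e := by
  intro ε hε
  obtain ⟨N, hN⟩ := h (ε / 2) (half_pos hε)
  obtain ⟨j, hj, hNj⟩ := ha N (ε / 2) (half_pos hε)
  refine ⟨j, hj, ?_⟩
  calc |y - j| = |-(a N - y) + (a N - j)| := by rw [neg_sub, sub_add_sub_cancel]
    _ ≤ |a N - y| + |a N - j| := (abs_add_le _ _).trans_eq (by rw [abs_neg])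
    _ ≤ (ε / 2) • |e| + (ε / 2) • |e| := add_le_add (hN N le_rfl) hNj
    _ = ε • |e| := by rw [← add_smul, add_halves]

theorem exists_regulator_of_mem_ruClosure (hArch : ArchimedeanVL X)
    (hcomp : UniformlyCompleteVL X) (hJ : IsOrderIdeal J) {x e : X} (hx : x ∈ ruClosure J e) :
    ∃ L ∈ ruClosure J e, x ∈ ruClosure J L := by
  choose b hbJ hb using fun k : ℕ => hx ((1 / 4 : ℝ) ^ k) (by positivity)
  set t : ℕ → X := fun k => (2 : ℝ) ^ k • |x - b k| with ht
  have ht0 : ∀ k, 0 ≤ t k := fun k => smul_nonneg (by positivity) (abs_nonneg _)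
  have hte : ∀ k, t k ≤ (1 / 2 : ℝ) ^ k • |e| := fun k =>
    calc t k ≤ (2 : ℝ) ^ k • (1 / 4 : ℝ) ^ k • |e| :=
          smul_le_smul_of_nonneg_left (hb k) (by positivity)
      _ = (1 / 2 : ℝ) ^ k • |e| := by rw [smul_smul, ← mul_pow]; norm_num
  have htC : ∀ k, t k ∈ ruClosure J e := fun k =>
    (ruClosure J e).smul_mem _ (ruClosure_isOrderIdeal hJ e _ (x - b k) (abs_abs _).le
      ((ruClosure J e).sub_mem hx (le_ruClosure (hbJ k))))
  obtain ⟨L, hL⟩ := hcomp.exists_ruTendsto_sum (abs_nonneg e) ht0 hte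
  have htL : ∀ k, t k ≤ L := fun k =>
    calc t k ≤ ∑ i ∈ range (k + 1), t i := single_le_sum (fun i _ => ht0 i) (self_mem_range_succ k)
      _ ≤ L := hL.le_of_monotone hArch (abs_nonneg e)
          (fun m n hmn => sum_le_sum_of_subset_of_nonneg (range_mono hmn) fun i _ _ => ht0 i) _
  refine ⟨L, mem_ruClosure_of_ruTendsto (fun n => sum_mem fun k _ => htC k) hL, fun ε hε => ?_⟩
  obtain ⟨k, hk⟩ := exists_pow_lt_of_lt_one hε (by norm_num : (1 / 2 : ℝ) < 1)
  refine ⟨b k, hbJ k, ?_⟩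
  calc |x - b k| = (1 / 2 : ℝ) ^ k • t k := by rw [ht, smul_smul, ← mul_pow]; norm_num
    _ ≤ (1 / 2 : ℝ) ^ k • |L| :=
      smul_le_smul_of_nonneg_left ((htL k).trans (le_abs_self L)) (by positivity)
    _ ≤ ε • |L| := smul_le_smul_of_nonneg_right hk.le (abs_nonneg L)

theorem mem_of_mem_ruClosure [FiniteDimensional ℝ (X ⧸ J)] (hArch : ArchimedeanVL X)
    (hcomp : UniformlyCompleteVL X) (hJ : IsOrderIdeal J) {x e : X} (hx : x ∈ ruClosure J e) :
    x ∈ J := by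
  obtain ⟨L, hLe, hxL⟩ := exists_regulator_of_mem_ruClosure hArch hcomp hJ hx
  by_cases hLL : L ∈ ruClosure J L
  · exact ruClosure_le hJ le_rfl (mem_of_mem_ruClosure_self hJ hLL) hxL
  · have hlt : ruClosure J L < ruClosure J e :=
      lt_of_le_of_ne (ruClosure_le (ruClosure_isOrderIdeal hJ e) le_ruClosure hLe)
        fun h => hLL (h ▸ hLe)
    have : (ruClosure J L).map J.mkQ < (ruClosure J e).map J.mkQ :=
      (Submodule.comapMkQRelIso J).symm.lt_iff_lt.2
        (show (⟨_, le_ruClosure⟩ : Set.Ici J) < ⟨_, le_ruClosure⟩ from hlt)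
    have := Submodule.finrank_lt_finrank_of_lt this
    exact mem_of_mem_ruClosure hArch hcomp hJ hxL
termination_by Module.finrank ℝ ((ruClosure J e).map J.mkQ)

end VectorLattice

theorem stmt19 {X : Type*} [AddCommGroup X] [Lattice X]
    [CovariantClass X X (· + ·) (· ≤ ·)] [Module ℝ X] [PosSMulMono ℝ X] (hArch : ArchimedeanVL X) (hcomp : UniformlyCompleteVL X)
    (J : Submodule ℝ X) (hJ : IsOrderIdeal J) (hfin : FiniteDimensional ℝ (X ⧸ J)) :
    RUClosed (J : Set X) := by
  have : IsOrderedAddMonoid X := { add_le_add_left := fun _ _ h c => add_le_add_left h c }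
  intro x a e he ha hconv
  refine mem_of_mem_ruClosure hArch hcomp hJ (e := e) fun ε hε => ?_
  obtain ⟨N, hN⟩ := hconv ε hε
  exact ⟨a N, ha N, by rw [abs_sub_comm, abs_of_nonneg he]; exact hN N le_rfl⟩
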